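/- Let A be a commutative multiplicative hyperring with identity, let u,v ∈ ℕ with u > v ≥ 2, let Q be a (u,v)-absorbing prime hyperideal of A, and let x ∈ A∖(Q ∪ U(A)). Then (Q : x) is a (u−1,v−1)-absorbing prime hyperideal of A. -/

import Mathlib

/-- A commutative multiplicative hyperring with identity: `(A,+)` is a commutative group,
`∘ = hmul` is a commutative associative hyperoperation with nonempty values, satisfying
`x∘(y+z) ⊆ x∘y + x∘z`, `x∘(−y) = (−x)∘y = −(x∘y)`, and `a ∈ a∘1` for all `a`. -/
class CommHyperring (A : Type*) [AddCommGroup A] [One A] where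
  hmul : A → A → Set A
  hmul_nonempty : ∀ x y : A, (hmul x y).Nonempty
  hmul_comm : ∀ x y : A, hmul x y = hmul y x
  hmul_assoc : ∀ x y z : A, (⋃ a ∈ hmul y z, hmul x a) = ⋃ b ∈ hmul x y, hmul b z
  hmul_add : ∀ x y z : A, hmul x (y + z) ⊆ Set.image2 (· + ·) (hmul x y) (hmul x z)
  hmul_neg : ∀ x y : A, hmul x (-y) = Neg.neg '' hmul x y
  neg_hmul : ∀ x y : A, hmul (-x) y = Neg.neg '' hmul x y
  one_mem : ∀ a : A, a ∈ hmul a 1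

open CommHyperring

variable {A : Type*} [AddCommGroup A] [One A] [CommHyperring A]

/-- The hyperoperation extended to subsets: `X∘Y = ⋃_{x∈X, y∈Y} x∘y`. -/
def sMul (X Y : Set A) : Set A := ⋃ x ∈ X, ⋃ y ∈ Y, hmul x y

/-- The product `x₁∘⋯∘xₙ` of the members of a list. -/
def hProd : List A → Set A
  | [] => {1}
  | [a] => {a}
  | a :: l => ⋃ c ∈ hProd l, hmul a c

/-- `xⁿ = x∘⋯∘x` (`n` factors). -/
def hPow (a : A) (n : ℕ) : Set A := hProd (List.replicate n a)

/-- `a` is a unit if `1 ∈ a∘b` for some `b`. -/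
def IsUnitH (a : A) : Prop := ∃ b : A, (1 : A) ∈ hmul a b

/-- A hyperideal of `A`. -/
def IsHyperideal (B : Set A) : Prop :=
  B.Nonempty ∧ (∀ x ∈ B, ∀ y ∈ B, x - y ∈ B) ∧ ∀ r : A, ∀ x ∈ B, hmul r x ⊆ B

def IsProperHyperideal (B : Set A) : Prop := IsHyperideal B ∧ B ≠ Set.univ

/-- A prime hyperideal. -/
def IsPrimeHyperideal (B : Set A) : Prop :=
  IsProperHyperideal B ∧ ∀ x y : A, hmul x y ⊆ B → x ∈ B ∨ y ∈ B

/-- The prime radical: the intersection of all prime hyperideals containing `B`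
(`= A` if there are none). -/
def radH (B : Set A) : Set A := ⋂₀ {P : Set A | IsPrimeHyperideal P ∧ B ⊆ P}

/-- A `𝒞`-hyperideal: meets a finite product `⇒` contains it. -/
def IsCHyperideal (B : Set A) : Prop :=
  IsHyperideal B ∧ ∀ l : List A, l ≠ [] → (hProd l ∩ B).Nonempty → hProd l ⊆ B

def setAdd (X Y : Set A) : Set A := Set.image2 (· + ·) X Y

/-- The sum `C₁ + ⋯ + Cₙ` of the finite products coded by a list of lists. -/
def sumProds (L : List (List A)) : Set A := L.foldr (fun l S => setAdd (hProd l) S) {0}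

/-- A strong `𝒞`-hyperideal: meets a finite sum of finite products `⇒` contains it. -/
def IsStrongCHyperideal (B : Set A) : Prop :=
  IsHyperideal B ∧ ∀ L : List (List A), L ≠ [] → (∀ l ∈ L, l ≠ []) →
    (sumProds L ∩ B).Nonempty → sumProds L ⊆ B

/-- A `v`-absorbing hyperideal. -/
def IsNAbsorbing (Q : Set A) (v : ℕ) : Prop :=
  IsProperHyperideal Q ∧ ∀ l : List A, l.length = v + 1 → hProd l ⊆ Q →
    ∃ l', l'.Sublist l ∧ l'.length = v ∧ hProd l' ⊆ Q

/-- A `(u,v)`-absorbing hyperideal. -/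
def IsUVAbsorbing (Q : Set A) (u v : ℕ) : Prop :=
  IsProperHyperideal Q ∧ ∀ l : List A, l.length = u → (∀ x ∈ l, ¬IsUnitH x) → hProd l ⊆ Q →
    ∃ l', l'.Sublist l ∧ l'.length = v ∧ hProd l' ⊆ Q

/-- An `AB`-`(u,v)`-absorbing hyperideal. -/
def IsABUVAbsorbing (Q : Set A) (u v : ℕ) : Prop :=
  IsProperHyperideal Q ∧ ∀ l : List A, l.length = u → hProd l ⊆ Q →
    ∃ l', l'.Sublist l ∧ l'.length = v ∧ hProd l' ⊆ Q

/-- A `(u,v)`-absorbing prime hyperideal. -/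
def IsUVAbsorbingPrime (Q : Set A) (u v : ℕ) : Prop :=
  IsProperHyperideal Q ∧ ∀ l : List A, l.length = u → (∀ x ∈ l, ¬IsUnitH x) → hProd l ⊆ Q →
    hProd (l.take v) ⊆ Q ∨ hProd (l.drop v) ⊆ Q

/-- A maximal hyperideal. -/
def IsMaximalHyperideal (M : Set A) : Prop :=
  IsProperHyperideal M ∧ ∀ B : Set A, IsHyperideal B → M ⊂ B → B = Set.univ

/-- `A` is local if it has exactly one maximal hyperideal. -/
def IsLocalH (A : Type*) [AddCommGroup A] [One A] [CommHyperring A] : Prop :=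
  ∃! M : Set A, IsMaximalHyperideal M

/-- `P` is a prime hyperideal minimal over `Q`. -/
def MinimalPrimeOver (Q P : Set A) : Prop :=
  IsPrimeHyperideal P ∧ Q ⊆ P ∧
    ∀ P' : Set A, IsPrimeHyperideal P' → Q ⊆ P' → P' ⊆ P → P' = P

/-- `Iⁿ = ⋃ {x₁∘⋯∘xₙ : xᵢ ∈ I}`. -/
def idealPow (I : Set A) (n : ℕ) : Set A :=
  ⋃ l ∈ {l : List A | l.length = n ∧ ∀ x ∈ l, x ∈ I}, hProd l

/-- `I₁∘⋯∘Iₙ = ⋃ {x₁∘⋯∘xₙ : xᵢ ∈ Iᵢ}`. -/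
def idealProd (L : List (Set A)) : Set A :=
  ⋃ l ∈ {l : List A | List.Forall₂ (· ∈ ·) l L}, hProd l

/-- `Abs(Q)`: the minimal `v` such that `Q` is `v`-absorbing. -/
noncomputable def AbsN (Q : Set A) : ℕ := sInf {v : ℕ | IsNAbsorbing Q v}

/-- `abs(Q)`: the minimal `v` such that `Q` is `(Abs(Q)+1, v)`-absorbing. -/
noncomputable def absN (Q : Set A) : ℕ := sInf {v : ℕ | IsUVAbsorbing Q (AbsN Q + 1) v}

/-- A primary hyperideal. -/
def IsPrimaryHyperideal (Q : Set A) : Prop :=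
  IsProperHyperideal Q ∧ ∀ x y : A, hmul x y ⊆ Q → x ∈ Q ∨ ∃ t : ℕ, 1 ≤ t ∧ hPow y t ⊆ Q

/-- `A` is a hyperfield if every nonzero element is a unit. -/
def IsHyperfield (A : Type*) [AddCommGroup A] [One A] [CommHyperring A] : Prop :=
  ∀ x : A, x ≠ 0 → IsUnitH x

/-- `(Q : x) = {a : a∘x ⊆ Q}`. -/
def colonH (Q : Set A) (x : A) : Set A := {a : A | hmul a x ⊆ Q}

/-- `J(A)`: the intersection of all maximal hyperideals of `A`. -/
def JacobsonH (A : Type*) [AddCommGroup A] [One A] [CommHyperring A] : Set A :=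
  ⋂₀ {M : Set A | IsMaximalHyperideal M}

/-!
Since `Q ⊆ (Q : x)` and `x ∉ Q`, the colon hyperideal is proper. If `x₁∘⋯∘x_{u-1} ⊆ (Q : x)`,
then the `u`-fold product with `x` inserted as the `v`-th factor lies in `Q`, and products do
not depend on the order of the factors. Absorption then gives either `x₁∘⋯∘x_{v-1}∘x ⊆ Q`,
i.e. `x₁∘⋯∘x_{v-1} ⊆ (Q : x)`, or `x_v∘⋯∘x_{u-1} ⊆ Q ⊆ (Q : x)`.
-/

lemma hProd_cons {a : A} {l : List A} (hl : l ≠ []) :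
    hProd (a :: l) = ⋃ c ∈ hProd l, hmul a c := by
  cases l with
  | nil => exact absurd rfl hl
  | cons b t => rfl

lemma hmul_left_comm (a b e : A) :
    ⋃ c ∈ hmul b e, hmul a c = ⋃ c ∈ hmul a e, hmul b c := by
  rw [hmul_assoc a b e, hmul_comm a b, ← hmul_assoc b a e]

lemma hProd_swap (a b : A) : ∀ l : List A, hProd (a :: b :: l) = hProd (b :: a :: l)
  | [] => by simp [hProd, hmul_comm]
  | c :: l => by
    simp only [hProd_cons (List.cons_ne_nil _ _), Set.biUnion_iUnion, hmul_left_comm a b]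

lemma hProd_eq_of_perm {l l' : List A} (p : l.Perm l') : hProd l = hProd l' := by
  induction p with
  | nil => rfl
  | @cons a l₁ l₂ p ih =>
    cases l₁ with
    | nil => rw [p.symm.eq_nil]
    | cons b t =>
      have h₂ : l₂ ≠ [] := by rintro rfl; exact List.cons_ne_nil b t p.eq_nil
      rw [hProd_cons (List.cons_ne_nil b t), hProd_cons h₂, ih]
  | swap a b l => exact hProd_swap b a l
  | trans _ _ ih₁ ih₂ => exact ih₁.trans ih₂

lemma hProd_cons_subset_iff {Q : Set A} {x : A} {l : List A} (hl : l ≠ []) :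
    hProd (x :: l) ⊆ Q ↔ hProd l ⊆ colonH Q x := by
  simp only [hProd_cons hl, Set.iUnion_subset_iff, colonH, hmul_comm x]
  rfl

lemma colonH_ne_univ {Q : Set A} {x : A} (hxQ : x ∉ Q) : colonH Q x ≠ Set.univ := fun h =>
  hxQ <| (h ▸ Set.mem_univ 1 : (1 : A) ∈ colonH Q x) (hmul_comm x 1 ▸ one_mem x)

lemma IsHyperideal.subset_colonH {Q : Set A} (hQ : IsHyperideal Q) (x : A) :
    Q ⊆ colonH Q x := fun q hq => by
  rw [colonH, Set.mem_ofPred_eq, hmul_comm]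
  exact hQ.2.2 x q hq

lemma IsHyperideal.colonH {Q : Set A} (hQ : IsHyperideal Q) (x : A) :
    IsHyperideal (colonH Q x) := by
  obtain ⟨⟨b, hb⟩, hsub, habsorb⟩ := id hQ
  refine ⟨⟨0, hQ.subset_colonH x (by simpa using hsub b hb b hb)⟩, ?_, ?_⟩
  · intro a ha b hb z hz
    rw [hmul_comm, sub_eq_add_neg] at hz
    obtain ⟨p, hp, _, hq, rfl⟩ := hmul_add x a (-b) hz
    rw [hmul_neg] at hq
    obtain ⟨q, hq, rfl⟩ := hq
    simpa only [sub_eq_add_neg] using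
      hsub p (ha (hmul_comm a x ▸ hp)) q (hb (hmul_comm b x ▸ hq))
  · intro r a ha c hc z hz
    obtain ⟨d, hd, hzd⟩ := Set.mem_iUnion₂.mp ((hmul_assoc r a x).symm ▸ Set.mem_biUnion hc hz)
    exact habsorb r d (ha hd) hzd

/-- if `Q` is `(u,v)`-absorbing prime with `u > v ≥ 2` and
`x ∈ A∖(Q ∪ U(A))`, then `(Q : x)` is `(u-1,v-1)`-absorbing prime. -/
theorem colon_uv_absorbing_prime (u v : ℕ) (h2v : 2 ≤ v) (hvu : v < u) (Q : Set A)
    (habs : IsUVAbsorbingPrime Q u v) (x : A) (hxQ : x ∉ Q) (hxu : ¬IsUnitH x) :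
    IsUVAbsorbingPrime (colonH Q x) (u - 1) (v - 1) := by
  obtain ⟨hQ, hQabs⟩ := habs
  refine ⟨⟨hQ.1.colonH x, colonH_ne_univ hxQ⟩, fun l hlen hnu hsub => ?_⟩
  set t := l.take (v - 1)
  set d := l.drop (v - 1)
  have ht : t.length = v - 1 := List.length_take_of_le (by omega)
  have ht₀ : t ≠ [] := List.ne_nil_of_length_pos (by omega)
  have hperm : (t ++ [x] ++ d).Perm (x :: l) := by
    simpa [t, d] using (List.perm_append_singleton x t).append_right d
  have hprod : hProd (t ++ [x] ++ d) ⊆ Q := by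
    rwa [hProd_eq_of_perm hperm, hProd_cons_subset_iff (List.ne_nil_of_length_pos (by omega))]
  have hunits : ∀ y ∈ t ++ [x] ++ d, ¬IsUnitH y := fun y hy => by
    rcases List.mem_cons.mp (hperm.mem_iff.mp hy) with rfl | hy
    exacts [hxu, hnu y hy]
  have hlen' : (t ++ [x]).length = v := by
    rw [List.length_append, ht, List.length_singleton]; omega
  rcases hQabs _ (by rw [hperm.length_eq, List.length_cons, hlen]; omega) hunits hprod with h | h
  · rw [List.take_left' hlen', hProd_eq_of_perm (List.perm_append_singleton x t),
      hProd_cons_subset_iff ht₀] at h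
    exact Or.inl h
  · rw [List.drop_left' hlen'] at h
    exact Or.inr (h.trans (hQ.1.subset_colonH x))
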